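/- arXiv:0802.1429 — 2 statements merged into one kernel-verified Lean document; each statement's English description precedes it below -/
import Mathlib

section
/- In an Osborn loop Q, for every x ∈ Q one has x^λ = (x^λ)^λ·(x^λ·x^ρ). -/
/-- A loop: a type with a binary operation `*` and identity `1` such that all
left and right translations are bijective (witnessed by the two division
operations `ldiv` (`x \ z`) and `rdiv` (`z / y`)). -/
class LoopStr (Q : Type*) extends Mul Q, One Q where
  one_mul : ∀ x : Q, 1 * x = x
  mul_one : ∀ x : Q, x * 1 = x
  /-- `ldiv a b = a \ b`, the unique `y` with `a * y = b`. -/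
  ldiv : Q → Q → Q
  /-- `rdiv b a = b / a`, the unique `x` with `x * a = b`. -/
  rdiv : Q → Q → Q
  mul_ldiv : ∀ a b : Q, a * ldiv a b = b
  ldiv_mul : ∀ a b : Q, ldiv a (a * b) = b
  rdiv_mul : ∀ a b : Q, rdiv a b * b = a
  mul_rdiv : ∀ a b : Q, rdiv (a * b) b = a

namespace LoopStr

variable {Q : Type*} [LoopStr Q]

/-- `x^λ`, the unique left inverse of `x` : `x^λ * x = 1`. -/
def lInv (x : Q) : Q := rdiv 1 x

/-- `x^ρ`, the unique right inverse of `x` : `x * x^ρ = 1`. -/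
def rInv (x : Q) : Q := ldiv x 1

/-- A loop is Osborn if `x * (((x^λ * y) * z) * x) = y * (z * x)` for all `x,y,z`. -/
def IsOsborn (Q : Type*) [LoopStr Q] : Prop :=
  ∀ x y z : Q, x * (((lInv x * y) * z) * x) = y * (z * x)

end LoopStr

open LoopStr

section Aux

variable {Q : Type*} [LoopStr Q]

lemma lInv_mul' (x : Q) : lInv x * x = 1 := LoopStr.rdiv_mul 1 x

lemma mul_rInv' (x : Q) : x * rInv x = 1 := LoopStr.mul_ldiv x 1

lemma left_cancel' {a u v : Q} (h : a * u = a * v) : u = v := by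
  have := congrArg (LoopStr.ldiv a) h
  rwa [LoopStr.ldiv_mul, LoopStr.ldiv_mul] at this

lemma right_cancel' {a u v : Q} (h : u * a = v * a) : u = v := by
  have := congrArg (fun t => LoopStr.rdiv t a) h
  simpa [LoopStr.mul_rdiv] using this

/-- Specialization of Osborn: `x * ((x^λ * z) * x) = z * x`. -/
lemma keyK (h : IsOsborn Q) (x z : Q) : x * ((lInv x * z) * x) = z * x := by
  have := h x z 1
  rwa [LoopStr.mul_one, LoopStr.one_mul] at this

/-- `(x^λ * x^λ) * x = x^ρ`. -/
lemma keyB (h : IsOsborn Q) (x : Q) : (lInv x * lInv x) * x = rInv x := by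
  have hk := keyK h x (lInv x)
  rw [lInv_mul'] at hk
  -- x * ((lInv x * lInv x) * x) = 1
  have h1 : x * ((lInv x * lInv x) * x) = x * rInv x := by
    rw [hk, mul_rInv']
  exact left_cancel' h1

/-- `(x^λ * x^ρ) * x^λ = x^λ * (x^λ * x^λ)`. -/
lemma keyG (h : IsOsborn Q) (x : Q) :
    (lInv x * rInv x) * lInv x = lInv x * (lInv x * lInv x) := by
  -- both sides, multiplied by x on the right and then by x on the left, give x^ρ
  have h1 : x * (((lInv x * rInv x) * lInv x) * x) = rInv x := by
    have := h x (rInv x) (lInv x)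
    rwa [lInv_mul', LoopStr.mul_one] at this
  have h2 : x * ((lInv x * (lInv x * lInv x)) * x) = rInv x := by
    have := keyK h x (lInv x * lInv x)
    rwa [keyB h x] at this
  exact right_cancel' (left_cancel' (h1.trans h2.symm))

end Aux

/-- in an Osborn loop, `x^λ = (x^λ)^λ·(x^λ·x^ρ)`. -/
theorem stmt8 (Q : Type*) [LoopStr Q] (h : IsOsborn Q) :
    ∀ x : Q, lInv x = lInv (lInv x) * (lInv x * rInv x) := by
  intro x
  set a := lInv x with ha
  -- keyK at a with z = a * x^ρ
  have hk : a * ((lInv a * (a * rInv x)) * a) = (a * rInv x) * a := keyK h a (a * rInv x)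
  have hg : (a * rInv x) * a = a * (a * a) := keyG h x
  have : a * ((lInv a * (a * rInv x)) * a) = a * (a * a) := hk.trans hg
  have h2 : (lInv a * (a * rInv x)) * a = a * a := left_cancel' this
  exact (right_cancel' h2).symm
end

section
/- In an Osborn loop Q, the following five conditions are pairwise equivalent: (i) (x^λ)^λ = x for all x (the left inverse map has order dividing 2); (ii) (x^ρ)^ρ = x for all x (the right inverse map has order dividing 2); (iii) x^λ = x^ρ for all x; (iv) Q has the left self inverse property, x^λ·(x·x) = x for all x; (v) Q has the right self inverse property, (x·x)·x^ρ = x for all x. -/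
open LoopStr

section Aux

variable {Q : Type*} [LoopStr Q]

lemma rInv_lInv' (x : Q) : rInv (lInv x) = x := by
  show ldiv (lInv x) 1 = x
  rw [← lInv_mul' x, ldiv_mul]

lemma lInv_rInv' (x : Q) : lInv (rInv x) = x := by
  show rdiv 1 (rInv x) = x
  rw [← mul_rInv' x, mul_rdiv]

lemma eq_rInv_of_mul_eq_one {x u : Q} (hu : x * u = 1) : u = rInv x := by
  have := ldiv_mul x u
  rw [hu] at this
  exact this.symm

lemma eq_lInv_of_mul_eq_one {x u : Q} (hu : u * x = 1) : u = lInv x := by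
  have := mul_rdiv u x
  rw [hu] at this
  exact this.symm

/-- In an Osborn loop, `x^ρ = (x^λ · x^λ) · x`. -/
lemma osb_D (h : IsOsborn Q) (x : Q) : rInv x = (lInv x * lInv x) * x := by
  have := h x 1 (lInv x)
  rw [LoopStr.mul_one, lInv_mul' x, LoopStr.one_mul] at this
  exact (eq_rInv_of_mul_eq_one this).symm

/-- In an Osborn loop, `x · (x^ρ · x) = x^λ · (x · x)`. -/
lemma osb_E (h : IsOsborn Q) (x : Q) : x * (rInv x * x) = lInv x * (x * x) := by
  have := h x (lInv x) x
  rwa [← osb_D h x] at this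

end Aux

/-- in an Osborn loop the five conditions `(x^λ)^λ = x`,
`(x^ρ)^ρ = x`, `x^λ = x^ρ`, LSIP `x^λ·(x·x) = x`, RSIP `(x·x)·x^ρ = x`
are pairwise equivalent. -/
theorem stmt13 (Q : Type*) [LoopStr Q] (h : IsOsborn Q) :
    [ (∀ x : Q, lInv (lInv x) = x),
      (∀ x : Q, rInv (rInv x) = x),
      (∀ x : Q, lInv x = rInv x),
      (∀ x : Q, lInv x * (x * x) = x),
      (∀ x : Q, (x * x) * rInv x = x) ].TFAE := by
  tfae_have 1 → 3 := by
    intro h1 x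
    have hx : x * lInv x = 1 := by
      have := lInv_mul' (lInv x)
      rwa [h1 x] at this
    exact eq_rInv_of_mul_eq_one hx
  tfae_have 3 → 1 := by
    intro h3 x
    rw [h3 (lInv x), rInv_lInv']
  tfae_have 3 → 2 := by
    intro h3 x
    rw [← h3 (rInv x), lInv_rInv']
  tfae_have 2 → 3 := by
    intro h2 x
    have hx : rInv x * x = 1 := by
      have := mul_rInv' (rInv x)
      rwa [h2 x] at this
    exact (eq_lInv_of_mul_eq_one hx).symm
  tfae_have 3 → 4 := by
    intro h3 x
    rw [← osb_E h x, ← h3 x, lInv_mul', LoopStr.mul_one]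
  tfae_have 4 → 3 := by
    intro h4 x
    have hE := osb_E h x
    rw [h4 x] at hE
    have h1 : rInv x * x = 1 := by
      have := ldiv_mul x (rInv x * x)
      rw [hE] at this
      have h0 : ldiv x x = 1 := by
        have := ldiv_mul x 1
        rwa [LoopStr.mul_one] at this
      rw [← this, h0]
    exact (eq_lInv_of_mul_eq_one h1).symm
  tfae_have 3 → 5 := by
    intro h3 x
    have hD := osb_D h (rInv x)
    rw [lInv_rInv'] at hD
    have h2 : rInv (rInv x) = x := by rw [← h3 (rInv x), lInv_rInv']
    rw [h2] at hD
    exact hD.symm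
  tfae_have 5 → 3 := by
    intro h5 x
    have := h5 (lInv x)
    rw [rInv_lInv', ← osb_D h x] at this
    rw [this]
  tfae_finish
end
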